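/- arXiv:1601.06689 — 2 statements merged into one kernel-verified Lean document; each statement's English description precedes it below -/
import Mathlib

section
/- Let W' be a type-2 alignment set of an index coding problem I. If I is rate 1/3 feasible (i.e., there exist a field F and vectors V_1,…,V_n ∈ F^3 under which all conflicts are resolved), then the W'-restricted index coding problem I_{W'} is rate 1/2 feasible, and consequently there are no W'-restricted internal conflicts. -/
/-!
Common definitions: an index coding problem with `n` messages (indexed by `Fin n`),
`T ≥ 1` receivers, demand sets `D j` and side-information sets `S j`.
-/

/-- An index coding problem with `n` messages. -/
structure ICP (n : ℕ) where
  T : ℕ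
  hT : 1 ≤ T
  D : Fin T → Finset (Fin n)
  S : Fin T → Finset (Fin n)
  hDS : ∀ j, Disjoint (D j) (S j)

namespace ICP

variable {n : ℕ}

/-- The interfering set `Interf_k(j)`: all messages other than `k` not in the side
information of receiver `j`, provided `k ∈ D j`; empty otherwise. -/
def Interf (P : ICP n) (k : Fin n) (j : Fin P.T) : Finset (Fin n) :=
  if k ∈ P.D j then Finset.univ \ insert k (P.S j) else ∅

/-- All conflicts are resolved by the assignment `V` of `L`-length vectors over `F`
to the messages: for every message `k` and receiver `j`, `V k` is outside the span of
the vectors assigned to `Interf_k(j)`. -/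
def Resolved (P : ICP n) (F : Type) [Field F] {L : ℕ} (V : Fin n → Fin L → F) : Prop :=
  ∀ (k : Fin n) (j : Fin P.T),
    V k ∉ Submodule.span F (V '' (P.Interf k j : Set (Fin n)))

/-- Rate `1/L` feasibility: there exist a finite field `F` and an assignment of
`L`-length vectors over `F` resolving all conflicts. -/
def RateFeasible (P : ICP n) (L : ℕ) : Prop :=
  ∃ (F : Type) (_ : Field F) (_ : Fintype F) (V : Fin n → Fin L → F),
    P.Resolved F V

/-- Adjacency in the alignment graph: `i ≠ i'` both interfere at a receiver `j`
demanding some message `k ∉ {i, i'}`. -/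
def AlignAdj (P : ICP n) (i i' : Fin n) : Prop :=
  i ≠ i' ∧ ∃ (j : Fin P.T) (k : Fin n), k ∈ P.D j ∧ k ≠ i ∧ k ≠ i' ∧
    i ∈ P.Interf k j ∧ i' ∈ P.Interf k j

/-- The alignment graph. -/
def alignGraph (P : ICP n) : SimpleGraph (Fin n) where
  Adj := P.AlignAdj
  symm := by
    constructor
    rintro a b ⟨hne, j, k, h1, h2, h3, h4, h5⟩
    exact ⟨hne.symm, j, k, h1, h3, h2, h5, h4⟩
  loopless := by constructor; rintro a ⟨hne, -⟩; exact hne rfl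

/-- Two messages lie in the same alignment set (connected component of the
alignment graph). -/
def SameAlignSet (P : ICP n) (i i' : Fin n) : Prop :=
  P.alignGraph.Reachable i i'

/-- Messages `i` and `k` are in conflict. -/
def InConflict (P : ICP n) (i k : Fin n) : Prop :=
  (∃ j, k ∈ P.D j ∧ i ∈ P.Interf k j) ∨ (∃ j, i ∈ P.D j ∧ k ∈ P.Interf i j)

/-- There is an internal conflict: a conflict between two messages lying in the
same alignment set. -/
def HasInternalConflict (P : ICP n) : Prop :=
  ∃ i k, P.InConflict i k ∧ P.SameAlignSet i k

/-- The conflict hypergraph, given as the set of unordered pairs `{{k}, Interf_k(j)}`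
over all receivers `j` and all demands `k ∈ D j`. -/
def conflictHypergraph (P : ICP n) : Set (Sym2 (Finset (Fin n))) :=
  {e | ∃ (j : Fin P.T) (k : Fin n), k ∈ P.D j ∧ e = s({k}, P.Interf k j)}

/-- The problem is groupcast: every message is demanded by at least one receiver. -/
def Groupcast (P : ICP n) : Prop := ∀ k : Fin n, ∃ j, k ∈ P.D j

/-- `i 0, i 1, i 2, i 3` form an acyclic subset of messages of size 4. -/
def AcyclicSubset4 (P : ICP n) (i : Fin 4 → Fin n) : Prop :=
  Function.Injective i ∧
    ∃ j : Fin 4 → Fin P.T, ∀ m : Fin 4, i m ∈ P.D (j m) ∧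
      ∀ m' : Fin 4, m' < m → i m' ∈ P.Interf (i m) (j m)

/-- The alignment set (connected component) of the vertex `v` has both a fork
(a vertex of degree at least 3) and a cycle all of whose vertices lie in it. -/
def HasForkAndCycle (P : ICP n) (v : Fin n) : Prop :=
  (∃ u, P.alignGraph.Reachable v u ∧ 3 ≤ (P.alignGraph.neighborSet u).ncard) ∧
  (∃ (u : Fin n) (c : P.alignGraph.Walk u u), c.IsCycle ∧
      ∀ x ∈ c.support, P.alignGraph.Reachable v x)

/-- A triangular interfering set: a 3-element set of messages simultaneously
interfering at some receiver, at least two of which are in conflict. -/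
def TriangularSet (P : ICP n) (W : Finset (Fin n)) : Prop :=
  W.card = 3 ∧ (∃ (j : Fin P.T) (k : Fin n), k ∈ P.D j ∧ W ⊆ P.Interf k j) ∧
    ∃ i i', i ∈ W ∧ i' ∈ W ∧ i ≠ i' ∧ P.InConflict i i'

/-- Two distinct triangular interfering sets are adjacent: they meet in exactly
two messages which are in conflict. -/
def TriAdj (P : ICP n) (W1 W2 : Finset (Fin n)) : Prop :=
  P.TriangularSet W1 ∧ P.TriangularSet W2 ∧ W1 ≠ W2 ∧
    ∃ i i', i ≠ i' ∧ W1 ∩ W2 = {i, i'} ∧ P.InConflict i i'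

/-- Two triangular interfering sets are connected: some finite sequence of
triangular interfering sets, with consecutive members adjacent, joins them. -/
def TriConnected (P : ICP n) (W1 W2 : Finset (Fin n)) : Prop :=
  P.TriangularSet W1 ∧ P.TriangularSet W2 ∧ Relation.ReflTransGen P.TriAdj W1 W2

/-- `W'` is a type-2 alignment set: the union of a maximal family of pairwise
connected triangular interfering sets. -/
def IsType2AlignSet (P : ICP n) (W' : Finset (Fin n)) : Prop :=
  ∃ 𝒯 : Set (Finset (Fin n)), 𝒯.Nonempty ∧
    (∀ W ∈ 𝒯, P.TriangularSet W) ∧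
    (∀ W1 ∈ 𝒯, ∀ W2 ∈ 𝒯, P.TriConnected W1 W2) ∧
    (∀ 𝒯' : Set (Finset (Fin n)), 𝒯 ⊆ 𝒯' → (∀ W ∈ 𝒯', P.TriangularSet W) →
      (∀ W1 ∈ 𝒯', ∀ W2 ∈ 𝒯', P.TriConnected W1 W2) → 𝒯' = 𝒯) ∧
    (W' : Set (Fin n)) = ⋃ W ∈ 𝒯, (W : Set (Fin n))

/-- The interfering set of message `k` at receiver `j` in the `W'`-restricted
index coding problem (its demand sets are `D j ∩ W'`, side information `S j ∩ W'`,
and message set `W'`). -/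
def rInterf (P : ICP n) (W' : Finset (Fin n)) (k : Fin n) (j : Fin P.T) :
    Finset (Fin n) :=
  if k ∈ P.D j ∩ W' then P.Interf k j ∩ W' else ∅

/-- Adjacency in the alignment graph of the `W'`-restricted problem. -/
def rAlignAdj (P : ICP n) (W' : Finset (Fin n)) (i i' : Fin n) : Prop :=
  i ≠ i' ∧ ∃ (j : Fin P.T) (k : Fin n), k ∈ P.D j ∩ W' ∧ k ≠ i ∧ k ≠ i' ∧
    i ∈ P.rInterf W' k j ∧ i' ∈ P.rInterf W' k j

/-- The alignment graph of the `W'`-restricted problem (messages outside `W'`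
are isolated vertices). -/
def rAlignGraph (P : ICP n) (W' : Finset (Fin n)) : SimpleGraph (Fin n) where
  Adj := P.rAlignAdj W'
  symm := by
    constructor
    rintro a b ⟨hne, j, k, h1, h2, h3, h4, h5⟩
    exact ⟨hne.symm, j, k, h1, h3, h2, h5, h4⟩
  loopless := by constructor; rintro a ⟨hne, -⟩; exact hne rfl

/-- Conflict in the `W'`-restricted problem. -/
def rInConflict (P : ICP n) (W' : Finset (Fin n)) (i k : Fin n) : Prop :=
  (∃ j, k ∈ P.D j ∩ W' ∧ i ∈ P.rInterf W' k j) ∨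
  (∃ j, i ∈ P.D j ∩ W' ∧ k ∈ P.rInterf W' i j)

/-- There is a `W'`-restricted internal conflict: a conflict of the restricted
problem between two messages in the same `W'`-restricted alignment set. -/
def HasRestrictedInternalConflict (P : ICP n) (W' : Finset (Fin n)) : Prop :=
  ∃ i k, i ∈ W' ∧ k ∈ W' ∧ P.rInConflict W' i k ∧ (P.rAlignGraph W').Reachable i k

/-- The `W'`-restricted index coding problem is rate `1/2` feasible: there exist a
finite field `F` and vectors `V i ∈ F²` for `i ∈ W'` such that for every `k ∈ W'`
and every receiver `j`, `V k ∉ span {V i : i ∈ Interf_k(j) ∩ W'}`. -/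
def RestrictedRateHalfFeasible (P : ICP n) (W' : Finset (Fin n)) : Prop :=
  ∃ (F : Type) (_ : Field F) (_ : Fintype F) (V : Fin n → Fin 2 → F),
    ∀ k ∈ W', ∀ j : Fin P.T,
      V k ∉ Submodule.span F (V '' ((P.Interf k j ∩ W') : Set (Fin n)))

end ICP

/-!
Take a rate-`1/3` solution `V` over a field `F`. A triangular interfering set misses the
demanded message, so its vectors span a proper subspace of `F³`, while two conflicting messages
have independent vectors. Hence adjacent triangular sets span the same plane, and all of `W'`
lies in one plane `U`. Two messages of `W'` interfering at a receiver that demands `k ∈ W'` are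
then on a common line through the origin, since otherwise they would span `U ∋ V k`.

Colour each message by its line. Inside `W'`, every interfering set is monochromatic and avoids
the colour of the demanded message; sending the colours injectively into a finite field `K` and
message `i` to `(1, colour i) ∈ K²` solves the restricted problem at rate `1/2`. Alignment edges
of the restricted problem preserve colours while conflicts change them, so no conflict is internal.
-/

open Submodule

theorem Relation.ReflTransGen.apply_eq {α β : Type*} {r : α → α → Prop} {f : α → β}
    (hf : ∀ x y, r x y → f x = f y) {a b : α} (h : Relation.ReflTransGen r a b) :
    f a = f b := by
  induction h with
  | refl => rfl
  | tail _ hbc ih => exact ih.trans (hf _ _ hbc)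

theorem exists_finiteField_embedding (α : Type*) [Finite α] :
    ∃ (K : Type) (_ : Field K) (_ : Fintype K), Nonempty (α ↪ K) := by
  have := Fintype.ofFinite α
  obtain ⟨p, hp, hprime⟩ := Nat.exists_infinite_primes (Fintype.card α)
  have := Fact.mk hprime
  exact ⟨ZMod p, inferInstance, inferInstance,
    Function.Embedding.nonempty_of_card_le (by simpa using hp)⟩

section LinearAlgebra

variable {K E : Type*} [Field K] [AddCommGroup E] [Module K E]

theorem LinearIndependent.span_range_eq_of_finrank_le {ι : Type*} [Fintype ι] {v : ι → E}
    (hv : LinearIndependent K v) {U : Submodule K E} [FiniteDimensional K U]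
    (hvU : Set.range v ⊆ U) (hU : Module.finrank K U ≤ Fintype.card ι) :
    span K (Set.range v) = U :=
  eq_of_le_of_finrank_le (span_le.2 hvU) (hU.trans (finrank_span_eq_card hv).ge)

theorem span_singleton_eq_of_not_linearIndependent_pair {x y : E} (hx : x ≠ 0) (hy : y ≠ 0)
    (h : ¬LinearIndependent K ![x, y]) : K ∙ x = K ∙ y := by
  rw [LinearIndependent.pair_iff' hx] at h
  push Not at h
  obtain ⟨a, rfl⟩ := h
  have ha : a ≠ 0 := by rintro rfl; simp at hy
  exact (span_singleton_smul_eq (IsUnit.mk0 a ha) x).symm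

theorem vecCons_one_notMem_span_image {t : Set K} (ht : t.Subsingleton) {a : K} (ha : a ∉ t) :
    ![1, a] ∉ span K ((fun b => ![1, b]) '' t) := by
  rcases ht.eq_empty_or_singleton with rfl | ⟨b, rfl⟩
  · simp
  · rw [Set.image_singleton, mem_span_singleton]
    rintro ⟨c, hc⟩
    have hc0 : c = 1 := by simpa using congrFun hc 0
    have hc1 : c * b = a := by simpa using congrFun hc 1
    exact ha (by simp [← hc1, hc0])

end LinearAlgebra

namespace ICP

variable {n : ℕ} (P : ICP n) (W' : Finset (Fin n))

def IsSeparatingColoring {α : Type*} (c : Fin n → α) : Prop :=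
  ∀ k ∈ W', ∀ j, (c '' (P.Interf k j ∩ W' : Set (Fin n))).Subsingleton ∧
    c k ∉ c '' (P.Interf k j ∩ W' : Set (Fin n))

namespace IsSeparatingColoring

variable {P W'} {α β : Type*} {c : Fin n → α}

theorem comp_iff {g : α → β} (hg : Function.Injective g) :
    P.IsSeparatingColoring W' (g ∘ c) ↔ P.IsSeparatingColoring W' c := by
  simp only [IsSeparatingColoring, Function.comp_apply, ← Set.image_image g c,
    hg.subsingleton_image_iff, hg.mem_set_image]

theorem restrictedRateHalfFeasible_of_field {K : Type} [Field K] [Fintype K] {f : Fin n → K}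
    (hf : P.IsSeparatingColoring W' f) : P.RestrictedRateHalfFeasible W' := by
  refine ⟨K, inferInstance, inferInstance, fun i => ![1, f i], fun k hk j => ?_⟩
  rw [← Set.image_image (fun b => ![1, b]) f]
  exact vecCons_one_notMem_span_image (hf k hk j).1 (hf k hk j).2

theorem restrictedRateHalfFeasible (hc : P.IsSeparatingColoring W' c) :
    P.RestrictedRateHalfFeasible W' := by
  obtain ⟨K, _, _, ⟨e⟩⟩ := exists_finiteField_embedding (Set.range c)
  have hrange : P.IsSeparatingColoring W' (Set.rangeFactorization c) :=
    (comp_iff Subtype.val_injective).1 hc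
  exact restrictedRateHalfFeasible_of_field ((comp_iff e.injective).2 hrange)

theorem eq_of_rAlignAdj (hc : P.IsSeparatingColoring W' c) {a b : Fin n}
    (hab : P.rAlignAdj W' a b) : c a = c b := by
  obtain ⟨-, j, k, hk, -, -, ha, hb⟩ := hab
  simp only [rInterf, if_pos hk] at ha hb
  exact (hc k (Finset.mem_inter.1 hk).2 j).1 ⟨a, Finset.mem_inter.1 ha, rfl⟩
    ⟨b, Finset.mem_inter.1 hb, rfl⟩

theorem eq_of_reachable (hc : P.IsSeparatingColoring W' c) {a b : Fin n}
    (hab : (P.rAlignGraph W').Reachable a b) : c a = c b :=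
  ((SimpleGraph.reachable_iff_reflTransGen a b).1 hab).apply_eq (f := c)
    fun _ _ => hc.eq_of_rAlignAdj

theorem ne_of_rInConflict (hc : P.IsSeparatingColoring W' c) {i k : Fin n}
    (hik : P.rInConflict W' i k) : c i ≠ c k := by
  rcases hik with ⟨j, hk, hi⟩ | ⟨j, hi, hk⟩
  · simp only [rInterf, if_pos hk] at hi
    exact fun h => (hc k (Finset.mem_inter.1 hk).2 j).2 ⟨i, Finset.mem_inter.1 hi, h⟩
  · simp only [rInterf, if_pos hi] at hk
    exact fun h => (hc i (Finset.mem_inter.1 hi).2 j).2 ⟨k, Finset.mem_inter.1 hk, h.symm⟩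

theorem not_hasRestrictedInternalConflict (hc : P.IsSeparatingColoring W' c) :
    ¬P.HasRestrictedInternalConflict W' := by
  rintro ⟨i, k, -, -, hik, hreach⟩
  exact hc.ne_of_rInConflict hik (hc.eq_of_reachable hreach)

end IsSeparatingColoring

namespace Resolved

variable {P W'} {F : Type} [Field F] {L : ℕ} {V : Fin n → Fin L → F}

theorem notMem_span_image_of_subset (hV : P.Resolved F V) {k : Fin n} {j : Fin P.T}
    {s : Set (Fin n)} (hs : s ⊆ P.Interf k j) : V k ∉ span F (V '' s) :=
  fun hk => hV k j (span_mono (Set.image_mono hs) hk)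

theorem notMem_span_singleton (hV : P.Resolved F V) {i k : Fin n} {j : Fin P.T}
    (hi : i ∈ P.Interf k j) : V k ∉ F ∙ V i := by
  simpa using hV.notMem_span_image_of_subset (s := {i}) (by simpa using hi)

theorem ne_zero (hV : P.Resolved F V) (k : Fin n) : V k ≠ 0 :=
  fun hk => hV k ⟨0, P.hT⟩ (hk ▸ zero_mem _)

theorem linearIndependent_of_inConflict (hV : P.Resolved F V) {i i' : Fin n}
    (hii' : P.InConflict i i') : LinearIndependent F ![V i, V i'] := by
  rcases hii' with ⟨j, -, hi⟩ | ⟨j, -, hi'⟩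
  · rw [LinearIndependent.pair_iff' (hV.ne_zero i)]
    exact fun a ha => hV.notMem_span_singleton hi (ha ▸ smul_mem _ a (mem_span_singleton_self _))
  · rw [LinearIndependent.pair_symm_iff, LinearIndependent.pair_iff' (hV.ne_zero i')]
    exact fun a ha => hV.notMem_span_singleton hi' (ha ▸ smul_mem _ a (mem_span_singleton_self _))

theorem finrank_span_image_lt (hV : P.Resolved F V) {k : Fin n} {j : Fin P.T}
    {W : Set (Fin n)} (hW : W ⊆ P.Interf k j) : Module.finrank F (span F (V '' W)) < L := by
  have hne : span F (V '' W) ≠ ⊤ := fun htop =>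
    hV.notMem_span_image_of_subset hW (htop ▸ mem_top)
  simpa using finrank_lt hne

theorem span_singleton_eq_of_mem_interf (hV : P.Resolved F V) {U : Submodule F (Fin L → F)}
    (hU : Module.finrank F U ≤ 2) {k i i' : Fin n} {j : Fin P.T} (hkU : V k ∈ U)
    (hi : i ∈ P.Interf k j) (hi' : i' ∈ P.Interf k j) (hiU : V i ∈ U) (hi'U : V i' ∈ U) :
    F ∙ V i = F ∙ V i' := by
  by_contra hne
  have hind : LinearIndependent F ![V i, V i'] := by
    by_contra hdep
    exact hne (span_singleton_eq_of_not_linearIndependent_pair (hV.ne_zero i) (hV.ne_zero i') hdep)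
  have hspan : span F (Set.range ![V i, V i']) = U := by
    refine hind.span_range_eq_of_finrank_le ?_ hU
    rw [Set.range_subset_iff, Fin.forall_fin_two]
    exact ⟨hiU, hi'U⟩
  have hrange : Set.range ![V i, V i'] ⊆ V '' P.Interf k j := by
    rw [Set.range_subset_iff, Fin.forall_fin_two]
    exact ⟨⟨i, hi, rfl⟩, ⟨i', hi', rfl⟩⟩
  exact hV k j (span_mono hrange (hspan ▸ hkU))

section ThreeDim

variable {V : Fin n → Fin 3 → F}

theorem finrank_span_image_le_two (hV : P.Resolved F V) {W : Finset (Fin n)}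
    (hW : P.TriangularSet W) : Module.finrank F (span F (V '' W)) ≤ 2 := by
  obtain ⟨-, ⟨j, k, -, hWk⟩, -⟩ := hW
  exact Nat.le_of_lt_succ (hV.finrank_span_image_lt (Finset.coe_subset.2 hWk))

theorem span_image_eq_of_triAdj (hV : P.Resolved F V) {W₁ W₂ : Finset (Fin n)}
    (h : P.TriAdj W₁ W₂) : span F (V '' W₁) = span F (V '' W₂) := by
  obtain ⟨hW₁, hW₂, -, i, i', -, hinter, hii'⟩ := h
  have hplane : ∀ W, P.TriangularSet W → i ∈ W → i' ∈ W →
      span F (Set.range ![V i, V i']) = span F (V '' W) := by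
    intro W hW hiW hi'W
    refine (hV.linearIndependent_of_inConflict hii').span_range_eq_of_finrank_le ?_
      (hV.finrank_span_image_le_two hW)
    rw [Set.range_subset_iff, Fin.forall_fin_two]
    exact ⟨subset_span ⟨i, hiW, rfl⟩, subset_span ⟨i', hi'W, rfl⟩⟩
  have hi : i ∈ W₁ ∩ W₂ := by simp [hinter]
  have hi' : i' ∈ W₁ ∩ W₂ := by simp [hinter]
  rw [Finset.mem_inter] at hi hi'
  exact (hplane W₁ hW₁ hi.1 hi'.1).symm.trans (hplane W₂ hW₂ hi.2 hi'.2)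

theorem exists_finrank_le_two_of_isType2AlignSet (hV : P.Resolved F V)
    (hW' : P.IsType2AlignSet W') :
    ∃ U : Submodule F (Fin 3 → F), Module.finrank F U ≤ 2 ∧ ∀ i ∈ W', V i ∈ U := by
  obtain ⟨𝒯, ⟨W₀, hW₀⟩, htri, hconn, -, hunion⟩ := hW'
  refine ⟨span F (V '' W₀), hV.finrank_span_image_le_two (htri W₀ hW₀), fun i hi => ?_⟩
  obtain ⟨W, hW, hiW⟩ := Set.mem_iUnion₂.1 (hunion ▸ Finset.mem_coe.2 hi)
  rw [(hconn W₀ hW₀ W hW).2.2.apply_eq (f := fun W : Finset (Fin n) => span F (V '' W))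
    fun _ _ => hV.span_image_eq_of_triAdj]
  exact subset_span ⟨i, hiW, rfl⟩

theorem isSeparatingColoring (hV : P.Resolved F V) (hW' : P.IsType2AlignSet W') :
    P.IsSeparatingColoring W' fun i => F ∙ V i := by
  obtain ⟨U, hU, hVU⟩ := hV.exists_finrank_le_two_of_isType2AlignSet hW'
  refine fun k hk j => ⟨?_, ?_⟩
  · rintro _ ⟨i, hi, rfl⟩ _ ⟨i', hi', rfl⟩
    exact hV.span_singleton_eq_of_mem_interf hU (hVU k hk) hi.1 hi'.1 (hVU i hi.2) (hVU i' hi'.2)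
  · rintro ⟨i, hi, hik : F ∙ V i = F ∙ V k⟩
    exact hV.notMem_span_singleton hi.1 (hik ▸ mem_span_singleton_self (V k))

end ThreeDim

end Resolved

end ICP

/-- If `W'` is a type-2 alignment set of a rate `1/3` feasible
index coding problem, then the `W'`-restricted problem is rate `1/2` feasible, and
consequently there are no `W'`-restricted internal conflicts. -/
theorem type2AlignSet_restricted_rateHalf {n : ℕ} (P : ICP n)
    (W' : Finset (Fin n)) (hW' : P.IsType2AlignSet W')
    (h : ∃ (F : Type) (_ : Field F) (V : Fin n → Fin 3 → F), P.Resolved F V) :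
    P.RestrictedRateHalfFeasible W' ∧ ¬ P.HasRestrictedInternalConflict W' := by
  obtain ⟨F, _, V, hV⟩ := h
  have hc := hV.isSeparatingColoring hW'
  exact ⟨hc.restrictedRateHalfFeasible, hc.not_hasRestrictedInternalConflict⟩
end

section
/- Let A be an alignment set of an index coding problem containing three messages i_1, i_2, i_3 that all belong to Interf_k(j) for a common receiver j and a common message k ∈ D(j). If A contains at least one message other than i_1, i_2, i_3, then the alignment graph has a vertex of A of degree at least 3 (a fork) and also a cycle all of whose vertices lie in A; i.e., A has both forks and cycles. -/
/-!
Three messages interfering at a common receiver are pairwise adjacent in the alignment graph,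
so they span a triangle, which is a cycle. A walk from the triangle to a further message of the
alignment set leaves the triangle along some edge `x w`; then `x` is adjacent to the two other
triangle vertices and to `w`, so `x` is a fork.
-/

namespace ICP

variable {n : ℕ} (P : ICP n) {j : Fin P.T} {i k : Fin n}

lemma mem_D_of_mem_interf (hi : i ∈ P.Interf k j) : k ∈ P.D j := by
  by_contra hk
  simp [Interf, hk] at hi

lemma ne_of_mem_interf (hi : i ∈ P.Interf k j) : i ≠ k := by
  rintro rfl
  unfold Interf at hi
  split_ifs at hi <;> simp at hi

lemma alignGraph_adj_of_mem_interf {a b : Fin n} (hab : a ≠ b) (ha : a ∈ P.Interf k j)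
    (hb : b ∈ P.Interf k j) : P.alignGraph.Adj a b :=
  ⟨hab, j, k, P.mem_D_of_mem_interf ha, (P.ne_of_mem_interf ha).symm,
    (P.ne_of_mem_interf hb).symm, ha, hb⟩

end ICP

namespace SimpleGraph

variable {V : Type*} {G : SimpleGraph V} {a b c : V}

lemma Walk.isCycle_triangle (hab : G.Adj a b) (hbc : G.Adj b c) (hca : G.Adj c a) :
    (cons hab (cons hbc (cons hca nil))).IsCycle := by
  simp [Walk.isCycle_def, hab.ne, hab.ne.symm, hbc.ne, hca.ne, hca.ne.symm]

lemma three_le_ncard_neighborSet [Finite V] {x y z w : V} (hy : G.Adj x y) (hz : G.Adj x z)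
    (hw : G.Adj x w) (hyz : y ≠ z) (hyw : y ≠ w) (hzw : z ≠ w) :
    3 ≤ (G.neighborSet x).ncard :=
  (Set.two_lt_ncard_iff).2 ⟨y, z, w, hy, hz, hw, hyz, hyw, hzw⟩

lemma exists_three_le_ncard_neighborSet_of_triangle [Finite V] {u : V} (hab : G.Adj a b)
    (hbc : G.Adj b c) (hca : G.Adj c a) (hu : G.Reachable a u) (hua : u ≠ a) (hub : u ≠ b)
    (huc : u ≠ c) : ∃ x, G.Reachable a x ∧ 3 ≤ (G.neighborSet x).ncard := by
  obtain ⟨p⟩ := hu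
  obtain ⟨⟨⟨x, w⟩, hxw⟩, -, hx, hw⟩ :=
    p.exists_boundary_dart {a, b, c} (by simp) (by simp [hua, hub, huc])
  simp only [Set.mem_insert_iff, Set.mem_singleton_iff, not_or] at hx hw
  obtain ⟨hwa, hwb, hwc⟩ := hw
  rcases hx with rfl | rfl | rfl
  · exact ⟨x, .rfl,
      three_le_ncard_neighborSet hab hca.symm hxw hbc.ne (Ne.symm hwb) (Ne.symm hwc)⟩
  · exact ⟨x, hab.reachable,
      three_le_ncard_neighborSet hab.symm hbc hxw hca.ne.symm (Ne.symm hwa) (Ne.symm hwc)⟩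
  · exact ⟨x, hca.symm.reachable,
      three_le_ncard_neighborSet hca hbc.symm hxw hab.ne (Ne.symm hwa) (Ne.symm hwb)⟩

end SimpleGraph

theorem fork_and_cycle_of_three_interfering_general {n : ℕ} (P : ICP n) (v : Fin n)
    (j : Fin P.T) (k : Fin n) (i₁ i₂ i₃ : Fin n)
    (h12 : i₁ ≠ i₂) (h13 : i₁ ≠ i₃) (h23 : i₂ ≠ i₃)
    (hi₁ : i₁ ∈ P.Interf k j) (hi₂ : i₂ ∈ P.Interf k j) (hi₃ : i₃ ∈ P.Interf k j)
    (hr₁ : P.alignGraph.Reachable v i₁)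
    (hextra : ∃ u, P.alignGraph.Reachable v u ∧ u ≠ i₁ ∧ u ≠ i₂ ∧ u ≠ i₃) :
    P.HasForkAndCycle v := by
  have a12 := P.alignGraph_adj_of_mem_interf h12 hi₁ hi₂
  have a23 := P.alignGraph_adj_of_mem_interf h23 hi₂ hi₃
  have a31 := P.alignGraph_adj_of_mem_interf h13.symm hi₃ hi₁
  obtain ⟨u, hu, hu₁, hu₂, hu₃⟩ := hextra
  obtain ⟨x, hx, hdeg⟩ := SimpleGraph.exists_three_le_ncard_neighborSet_of_triangle
    a12 a23 a31 (hr₁.symm.trans hu) hu₁ hu₂ hu₃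
  exact ⟨⟨x, hr₁.trans hx, hdeg⟩, i₁, _, SimpleGraph.Walk.isCycle_triangle a12 a23 a31,
    fun y hy => hr₁.trans ⟨SimpleGraph.Walk.takeUntil _ y hy⟩⟩

/-- If an alignment set (the component of `v`) contains three
distinct messages interfering at a common receiver demanding a common message, and
the alignment set contains at least one further message, then it has both forks and
cycles. -/
theorem fork_and_cycle_of_three_interfering {n : ℕ} (P : ICP n) (v : Fin n)
    (j : Fin P.T) (k : Fin n) (hk : k ∈ P.D j) (i₁ i₂ i₃ : Fin n)
    (h12 : i₁ ≠ i₂) (h13 : i₁ ≠ i₃) (h23 : i₂ ≠ i₃)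
    (hi₁ : i₁ ∈ P.Interf k j) (hi₂ : i₂ ∈ P.Interf k j) (hi₃ : i₃ ∈ P.Interf k j)
    (hr₁ : P.alignGraph.Reachable v i₁) (hr₂ : P.alignGraph.Reachable v i₂)
    (hr₃ : P.alignGraph.Reachable v i₃)
    (hextra : ∃ u, P.alignGraph.Reachable v u ∧ u ≠ i₁ ∧ u ≠ i₂ ∧ u ≠ i₃) :
    P.HasForkAndCycle v :=
  fork_and_cycle_of_three_interfering_general P v j k i₁ i₂ i₃ h12 h13 h23 hi₁ hi₂ hi₃ hr₁ hextra
end
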